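/- arXiv:2502.05059 — 2 statements merged into one kernel-verified Lean document; each statement's English description precedes it below -/
import Mathlib

section
/- Let (G_y, X) and (G_z, X) be terminal graphs with V(G_y) ∩ V(G_z) = X, and let G be their union (V(G) = V(G_y) ∪ V(G_z), E(G) = E(G_y) ∪ E(G_z)), so that (G, X) is a terminal graph. Let S_y ⊆ V(G_y) ∖ X have characteristic (α_y, β_y) in (G_y, X) and let S_z ⊆ V(G_z) ∖ X have characteristic (α_z, β_z) in (G_z, X). Then the characteristic (α, β) of S_y ∪ S_z in (G, X) satisfies, for every D ⊆ X: α(D) = α_y(D) + α_z(D), and β(D) = 1 if and only if β_y(D) = 1 and β_z(D) = 1. -/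
/-!
Since the two sides meet only in `X`, where the type `D` prescribes the cover, a typed vertex
cover of the join is the union of its restrictions to the two sides, and conversely any two
typed covers of the sides glue to one of the join. This bijection adds reduced sizes, because the
non-terminal parts of the sides are disjoint. For an additive cost on a product, the minimum is
the sum of the minima, and it is attained exactly once iff both minima are attained exactly once.
-/

open Finset

variable {V : Type*}

/-- `M` is a vertex cover of `(G with vertex set A) − S`: `M ⊆ A \ S` and every
edge of `G` with both endpoints outside `S` has an endpoint in `M`. -/
def IsVCDel [DecidableEq V] (G : SimpleGraph V) (A S M : Finset V) : Prop :=
  M ⊆ A \ S ∧ ∀ ⦃u v : V⦄, G.Adj u v → u ∉ S → v ∉ S → u ∈ M ∨ v ∈ M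

/-- `(G, A, X)` is a terminal graph: vertex set `A`, all edges of `G` inside
`A`, and `X ⊆ A` is an independent set of `G`. -/
def IsTerminalGraph [DecidableEq V] (G : SimpleGraph V) (A X : Finset V) : Prop :=
  X ⊆ A ∧ (∀ ⦃u v : V⦄, G.Adj u v → u ∈ A ∧ v ∈ A) ∧
    ∀ u ∈ X, ∀ v ∈ X, ¬ G.Adj u v

/-- A vertex cover of type `D` of `(G with vertex set A, terminals X) − S`:
a vertex cover `M` of `G − S` with `M ∩ X = D`. -/
def IsTypedVC [DecidableEq V] (G : SimpleGraph V) (A X S D M : Finset V) : Prop :=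
  IsVCDel G A S M ∧ M ∩ X = D

/-- `(α, β)` is the characteristic of `S` in the terminal graph `(G, A, X)`:
for each `D ⊆ X`, `α D` is the minimum reduced size `|M \ X|` of a vertex
cover `M` of type `D` of `G − S`, and `β D = 1` iff there is exactly one vertex
cover of type `D` with reduced size `α D` (and `β D = 2` otherwise). -/
def IsCharacteristic [DecidableEq V] (G : SimpleGraph V) (A X S : Finset V)
    (α β : Finset V → ℕ) : Prop :=
  ∀ D ⊆ X,
    (∃ M, IsTypedVC G A X S D M ∧ (M \ X).card = α D) ∧
    (∀ M, IsTypedVC G A X S D M → α D ≤ (M \ X).card) ∧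
    (β D = 1 ∨ β D = 2) ∧
    (β D = 1 ↔ ∃! M, IsTypedVC G A X S D M ∧ (M \ X).card = α D)

section

open Set

variable {A B C M : Type*} [AddCommMonoid M] [PartialOrder M] [IsOrderedCancelAddMonoid M]

theorem existsUnique_prod_and_iff {p : A → Prop} {q : B → Prop} :
    (∃! x : A × B, p x.1 ∧ q x.2) ↔ (∃! a, p a) ∧ ∃! b, q b := by
  constructor
  · rintro ⟨⟨a, b⟩, ⟨ha, hb⟩, huniq⟩
    exact ⟨⟨a, ha, fun a' ha' => congrArg Prod.fst (huniq (a', b) ⟨ha', hb⟩)⟩,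
      ⟨b, hb, fun b' hb' => congrArg Prod.snd (huniq (a, b') ⟨ha, hb'⟩)⟩⟩
  · rintro ⟨⟨a, ha, hua⟩, ⟨b, hb, hub⟩⟩
    exact ⟨(a, b), ⟨ha, hb⟩, fun x hx => Prod.ext (hua _ hx.1) (hub _ hx.2)⟩

variable (e : A × B ≃ C) {c : C → M} {ca : A → M} {cb : B → M} {a b : M}

theorem isLeast_range_of_equiv_prod (hc : ∀ x, c (e x) = ca x.1 + cb x.2)
    (ha : IsLeast (range ca) a) (hb : IsLeast (range cb) b) :
    IsLeast (range c) (a + b) := by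
  obtain ⟨⟨x, rfl⟩, ⟨y, rfl⟩⟩ := And.intro ha.1 hb.1
  refine ⟨⟨e (x, y), hc _⟩, ?_⟩
  rintro _ ⟨z, rfl⟩
  rw [← e.apply_symm_apply z, hc]
  exact add_le_add (ha.2 ⟨_, rfl⟩) (hb.2 ⟨_, rfl⟩)

theorem existsUnique_eq_add_iff_of_equiv_prod (hc : ∀ x, c (e x) = ca x.1 + cb x.2)
    (ha : a ∈ lowerBounds (range ca)) (hb : b ∈ lowerBounds (range cb)) :
    (∃! z, c z = a + b) ↔ (∃! x, ca x = a) ∧ ∃! y, cb y = b := by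
  rw [← existsUnique_prod_and_iff, ← e.existsUnique_congr_right]
  refine existsUnique_congr fun x => ?_
  rw [hc, eq_comm, add_eq_add_iff_eq_and_eq (ha ⟨_, rfl⟩) (hb ⟨_, rfl⟩), eq_comm, @eq_comm _ b]

end

section Join

variable [DecidableEq V]

theorem IsVCDel.inter {G H : SimpleGraph V} {A A' S S' M : Finset V} (hM : IsVCDel H A S M)
    (hGH : G ≤ H) (hG : ∀ ⦃u v : V⦄, G.Adj u v → u ∈ A' ∧ v ∈ A') (hS : S ∩ A' = S') :
    IsVCDel G A' S' (M ∩ A') := by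
  subst hS
  refine ⟨fun w hw => ?_, fun u v huv hu hv => ?_⟩
  · have := hM.1 (mem_inter.1 hw).1
    simp only [mem_inter, mem_sdiff] at hw this ⊢
    tauto
  · obtain ⟨hu', hv'⟩ := hG huv
    simp only [mem_inter] at hu hv ⊢
    have := hM.2 (hGH huv) (fun h => hu ⟨h, hu'⟩) (fun h => hv ⟨h, hv'⟩)
    tauto

theorem IsVCDel.sup {G G' : SimpleGraph V} {A A' S S' M M' : Finset V} (hM : IsVCDel G A S M)
    (hM' : IsVCDel G' A' S' M') (hMS' : Disjoint M S') (hM'S : Disjoint M' S) :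
    IsVCDel (G ⊔ G') (A ∪ A') (S ∪ S') (M ∪ M') := by
  refine ⟨fun w hw => ?_, fun u v huv hu hv => ?_⟩
  · simp only [mem_sdiff, mem_union, not_or]
    rcases mem_union.1 hw with hw | hw
    · exact ⟨.inl (mem_sdiff.1 (hM.1 hw)).1, (mem_sdiff.1 (hM.1 hw)).2,
        disjoint_left.1 hMS' hw⟩
    · exact ⟨.inr (mem_sdiff.1 (hM'.1 hw)).1, disjoint_left.1 hM'S hw,
        (mem_sdiff.1 (hM'.1 hw)).2⟩
  · simp only [mem_union, not_or] at hu hv ⊢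
    rcases huv with huv | huv
    · have := hM.2 huv hu.1 hv.1
      tauto
    · have := hM'.2 huv hu.2 hv.2
      tauto

variable {Ay Az X : Finset V}

theorem disjoint_of_subset_of_subset_sdiff {s t : Finset V} (hInter : Ay ∩ Az = X)
    (hs : s ⊆ Ay) (ht : t ⊆ Az \ X) : Disjoint s t :=
  disjoint_left.2 fun _ hws hwt =>
    (mem_sdiff.1 (ht hwt)).2 (hInter ▸ mem_inter.2 ⟨hs hws, (mem_sdiff.1 (ht hwt)).1⟩)

theorem union_inter_eq_left_of_inter_eq {My Mz : Finset V} (hInter : Ay ∩ Az = X)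
    (hMy : My ⊆ Ay) (hMz : Mz ⊆ Az) (hD : Mz ∩ X ⊆ My) : (My ∪ Mz) ∩ Ay = My := by
  rw [union_inter_distrib_right, inter_eq_left.2 hMy, union_eq_left]
  refine Subset.trans (fun w hw => ?_) hD
  rw [mem_inter] at hw ⊢
  exact ⟨hw.1, hInter ▸ mem_inter.2 ⟨hw.2, hMz hw.1⟩⟩

theorem card_union_sdiff_of_inter_eq {My Mz : Finset V} (hInter : Ay ∩ Az = X)
    (hMy : My ⊆ Ay) (hMz : Mz ⊆ Az) :
    ((My ∪ Mz) \ X).card = (My \ X).card + (Mz \ X).card := by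
  rw [union_sdiff_distrib, card_union_of_disjoint]
  exact disjoint_of_subset_of_subset_sdiff hInter (sdiff_subset.trans hMy)
    (sdiff_subset_sdiff hMz subset_rfl)

variable {Gy Gz : SimpleGraph V} {Sy Sz D : Finset V}

theorem IsTypedVC.subset {G : SimpleGraph V} {A S M : Finset V} (hM : IsTypedVC G A X S D M) :
    M ⊆ A :=
  hM.1.1.trans sdiff_subset

theorem IsTypedVC.inter {G H : SimpleGraph V} {A A' S S' M : Finset V}
    (hM : IsTypedVC H A X S D M) (hGH : G ≤ H) (hG : IsTerminalGraph G A' X)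
    (hS : S ∩ A' = S') : IsTypedVC G A' X S' D (M ∩ A') :=
  ⟨hM.1.inter hGH hG.2.1 hS, by rw [inter_assoc, inter_eq_right.2 hG.1, hM.2]⟩

theorem IsTypedVC.sup (hInter : Ay ∩ Az = X) (hSy : Sy ⊆ Ay \ X) (hSz : Sz ⊆ Az \ X)
    {My Mz : Finset V} (hMy : IsTypedVC Gy Ay X Sy D My) (hMz : IsTypedVC Gz Az X Sz D Mz) :
    IsTypedVC (Gy ⊔ Gz) (Ay ∪ Az) X (Sy ∪ Sz) D (My ∪ Mz) :=
  ⟨hMy.1.sup hMz.1 (disjoint_of_subset_of_subset_sdiff hInter hMy.subset hSz)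
      (disjoint_of_subset_of_subset_sdiff (inter_comm Az Ay ▸ hInter) hMz.subset hSy),
    by rw [union_inter_distrib_right, hMy.2, hMz.2, union_self]⟩

theorem union_inter_eq_of_subset_sdiff (hInter : Ay ∩ Az = X) (hSy : Sy ⊆ Ay \ X)
    (hSz : Sz ⊆ Az \ X) : (Sy ∪ Sz) ∩ Ay = Sy := by
  rw [union_inter_distrib_right, inter_eq_left.2 (hSy.trans sdiff_subset),
    disjoint_iff_inter_eq_empty.1 (disjoint_of_subset_of_subset_sdiff hInter subset_rfl hSz).symm,
    union_empty]

def typedVCSupEquiv (hGy : IsTerminalGraph Gy Ay X) (hGz : IsTerminalGraph Gz Az X)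
    (hInter : Ay ∩ Az = X) (hSy : Sy ⊆ Ay \ X) (hSz : Sz ⊆ Az \ X) :
    {My // IsTypedVC Gy Ay X Sy D My} × {Mz // IsTypedVC Gz Az X Sz D Mz} ≃
      {M // IsTypedVC (Gy ⊔ Gz) (Ay ∪ Az) X (Sy ∪ Sz) D M} where
  toFun p := ⟨p.1.1 ∪ p.2.1, p.1.2.sup hInter hSy hSz p.2.2⟩
  invFun M :=
    (⟨M.1 ∩ Ay, M.2.inter le_sup_left hGy (union_inter_eq_of_subset_sdiff hInter hSy hSz)⟩,
     ⟨M.1 ∩ Az, M.2.inter le_sup_right hGz <| by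
        rw [union_comm]
        exact union_inter_eq_of_subset_sdiff (inter_comm Az Ay ▸ hInter) hSz hSy⟩)
  left_inv := fun ⟨⟨My, hMy⟩, ⟨Mz, hMz⟩⟩ => by
    refine Prod.ext (Subtype.ext ?_) (Subtype.ext ?_) <;> dsimp only
    · exact union_inter_eq_left_of_inter_eq hInter hMy.subset hMz.subset
        (hMz.2.trans hMy.2.symm ▸ inter_subset_left)
    · rw [union_comm My Mz]
      exact union_inter_eq_left_of_inter_eq (inter_comm Az Ay ▸ hInter) hMz.subset hMy.subset
        (hMy.2.trans hMz.2.symm ▸ inter_subset_left)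
  right_inv := fun ⟨M, hM⟩ => Subtype.ext <| by
    dsimp only
    rw [← inter_union_distrib_left, inter_eq_left.2 hM.subset]

end Join

section Characteristic

variable [DecidableEq V] {G : SimpleGraph V} {A X S D : Finset V} {α β : Finset V → ℕ}

theorem IsCharacteristic.isLeast (h : IsCharacteristic G A X S α β) (hD : D ⊆ X) :
    IsLeast (Set.range fun M : {M // IsTypedVC G A X S D M} => (M.1 \ X).card) (α D) := by
  obtain ⟨⟨M, hM, hMα⟩, hmin, -⟩ := h D hD
  exact ⟨⟨⟨M, hM⟩, hMα⟩, by rintro _ ⟨⟨N, hN⟩, rfl⟩; exact hmin N hN⟩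

theorem IsCharacteristic.eq_one_iff (h : IsCharacteristic G A X S α β) (hD : D ⊆ X) :
    β D = 1 ↔ ∃! M : {M // IsTypedVC G A X S D M}, (M.1 \ X).card = α D := by
  rw [(h D hD).2.2.2]
  simp only [ExistsUnique, Subtype.exists, Subtype.forall, Subtype.mk.injEq, and_imp, exists_prop,
    and_assoc]

end Characteristic

theorem char_join_terminal_general [DecidableEq V]
    (Gy Gz : SimpleGraph V) (Ay Az X : Finset V)
    (hGy : IsTerminalGraph Gy Ay X) (hGz : IsTerminalGraph Gz Az X)
    (hInter : Ay ∩ Az = X)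
    (Sy Sz : Finset V) (hSy : Sy ⊆ Ay \ X) (hSz : Sz ⊆ Az \ X)
    (αy βy αz βz α β : Finset V → ℕ)
    (hy : IsCharacteristic Gy Ay X Sy αy βy)
    (hz : IsCharacteristic Gz Az X Sz αz βz)
    (h : IsCharacteristic (Gy ⊔ Gz) (Ay ∪ Az) X (Sy ∪ Sz) α β) :
    ∀ D ⊆ X, α D = αy D + αz D ∧ (β D = 1 ↔ βy D = 1 ∧ βz D = 1) := by
  intro D hD
  let e := typedVCSupEquiv (D := D) hGy hGz hInter hSy hSz
  have hcard : ∀ p, ((e p).1 \ X).card = (p.1.1 \ X).card + (p.2.1 \ X).card := fun p =>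
    card_union_sdiff_of_inter_eq hInter p.1.2.subset p.2.2.subset
  have hα : α D = αy D + αz D :=
    (h.isLeast hD).unique <| isLeast_range_of_equiv_prod e hcard (hy.isLeast hD) (hz.isLeast hD)
  refine ⟨hα, ?_⟩
  rw [h.eq_one_iff hD, hy.eq_one_iff hD, hz.eq_one_iff hD, hα]
  exact existsUnique_eq_add_iff_of_equiv_prod e hcard (hy.isLeast hD).2 (hz.isLeast hD).2

/-- Join of two terminal graphs sharing exactly the terminals `X`: the
characteristic of `S_y ∪ S_z` in the union is obtained componentwise. -/
theorem char_join_terminal [Fintype V] [DecidableEq V]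
    (Gy Gz : SimpleGraph V) (Ay Az X : Finset V)
    (hGy : IsTerminalGraph Gy Ay X) (hGz : IsTerminalGraph Gz Az X)
    (hInter : Ay ∩ Az = X)
    (Sy Sz : Finset V) (hSy : Sy ⊆ Ay \ X) (hSz : Sz ⊆ Az \ X)
    (αy βy αz βz α β : Finset V → ℕ)
    (hy : IsCharacteristic Gy Ay X Sy αy βy)
    (hz : IsCharacteristic Gz Az X Sz αz βz)
    (h : IsCharacteristic (Gy ⊔ Gz) (Ay ∪ Az) X (Sy ∪ Sz) α β) :
    ∀ D ⊆ X, α D = αy D + αz D ∧ (β D = 1 ↔ βy D = 1 ∧ βz D = 1) :=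
  char_join_terminal_general Gy Gz Ay Az X hGy hGz hInter Sy Sz hSy hSz αy βy αz βz α β hy hz h
end

section
/- Let (G', X') be a terminal graph, let v ∈ X', set X = X' ∖ {v}, let N ⊆ X, and let G be the graph obtained from G' by adding the edge {v, w} for every w ∈ N, so that (G, X) is a terminal graph. Let S ⊆ V(G') ∖ X' have characteristic (α', β') in (G', X'). Then the characteristic (α, β) of S in (G, X) satisfies, for every D ⊆ X (writing D₊ = D ∪ {v}): α(D) = α'(D₊) + 1 if N ⊄ D, and α(D) = min(α'(D), α'(D₊) + 1) if N ⊆ D; moreover β(D) = β'(D) if N ⊆ D and α'(D) < α'(D₊) + 1, β(D) = β'(D₊) if N ⊄ D or α'(D) > α'(D₊) + 1, and β(D) = 2 if N ⊆ D and α'(D) = α'(D₊) + 1. -/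
open Finset

variable {V : Type*}

/-!
A vertex cover `M` of `G − S`, where `G` is `G'` plus the star from `v` to `N`, falls into one of
two classes. If `v ∈ M`, the star is covered, so `M` is exactly a cover of `G' − S` of type
`D ∪ {v}`, and its reduced size grows by one because `v` is no longer a terminal. If `v ∉ M`, every
vertex of `N` must lie in `M`, hence in `D`, and then `M` is exactly a cover of `G' − S` of type `D`
with the same reduced size. The characteristic over a disjoint union of two classes is read off from
the two minima: the smaller one wins, and a tie gives two distinct minimizers.
-/

/-- `a` is the minimum of `f` over `P`, and `b` is the number of minimizers, capped at two. -/
def IsMinCount {α : Type*} (P : α → Prop) (f : α → ℕ) (a b : ℕ) : Prop :=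
  (∃ x, P x ∧ f x = a) ∧ (∀ x, P x → a ≤ f x) ∧ (b = 1 ∨ b = 2) ∧
    (b = 1 ↔ ∃! x, P x ∧ f x = a)

namespace IsMinCount

variable {α : Type*} {P Q : α → Prop} {f g : α → ℕ} {a b c d : ℕ}

theorem unique {a' b' : ℕ} (h : IsMinCount P f a b) (h' : IsMinCount P f a' b') :
    a = a' ∧ b = b' := by
  obtain ⟨⟨x, hx, rfl⟩, hmin, hb, hb1⟩ := h
  obtain ⟨⟨x', hx', rfl⟩, hmin', hb', hb1'⟩ := h'
  have ha : f x = f x' := le_antisymm (hmin x' hx') (hmin' x hx)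
  refine ⟨ha, ?_⟩
  rw [ha] at hb1
  have : b = 1 ↔ b' = 1 := hb1.trans hb1'.symm
  omega

theorem congr (hPQ : ∀ x, P x ↔ Q x) (hfg : ∀ x, P x → g x = f x) (h : IsMinCount P f a b) :
    IsMinCount Q g a b := by
  obtain ⟨⟨x, hx, hfx⟩, hmin, hb, hb1⟩ := h
  refine ⟨⟨x, (hPQ x).1 hx, (hfg x hx).trans hfx⟩, fun y hy => ?_, hb, ?_⟩
  · rw [hfg y ((hPQ y).2 hy)]
    exact hmin y ((hPQ y).2 hy)
  · refine hb1.trans (existsUnique_congr fun y => ?_)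
    rw [← hPQ y]
    exact and_congr_right fun hy => by rw [hfg y hy]

theorem add_const (h : IsMinCount P f a b) (c : ℕ) :
    IsMinCount P (fun x => f x + c) (a + c) b := by
  obtain ⟨⟨x, hx, hfx⟩, hmin, hb, hb1⟩ := h
  refine ⟨⟨x, hx, congrArg (· + c) hfx⟩, fun y hy => Nat.add_le_add_right (hmin y hy) c, hb, ?_⟩
  simpa only [Nat.add_right_cancel_iff] using hb1

theorem or_of_lt (hP : IsMinCount P f a b) (hQ : IsMinCount Q f c d) (hac : a < c) :
    IsMinCount (fun x => P x ∨ Q x) f a b := by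
  obtain ⟨⟨x, hx, hfx⟩, hmin, hb, hb1⟩ := hP
  have hQ_gt : ∀ y, Q y → a < f y := fun y hy => hac.trans_le (hQ.2.1 y hy)
  refine ⟨⟨x, Or.inl hx, hfx⟩, ?_, hb, hb1.trans (existsUnique_congr fun y => ?_)⟩
  · rintro y (hy | hy)
    exacts [hmin y hy, (hQ_gt y hy).le]
  · refine ⟨fun ⟨hy, hfy⟩ => ⟨Or.inl hy, hfy⟩, ?_⟩
    rintro ⟨hy | hy, hfy⟩
    exacts [⟨hy, hfy⟩, absurd hfy (hQ_gt y hy).ne']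

theorem or_of_eq (hPQ : ∀ x, P x → ¬ Q x) (hP : IsMinCount P f a b) (hQ : IsMinCount Q f a d) :
    IsMinCount (fun x => P x ∨ Q x) f a 2 := by
  obtain ⟨⟨x, hx, hfx⟩, hmin, -⟩ := hP
  obtain ⟨⟨y, hy, hfy⟩, hmin', -⟩ := hQ
  have hxy : x ≠ y := fun hxy => hPQ x hx (hxy ▸ hy)
  refine ⟨⟨x, Or.inl hx, hfx⟩, ?_, Or.inr rfl, ?_⟩
  · rintro z (hz | hz)
    exacts [hmin z hz, hmin' z hz]
  · simp only [OfNat.ofNat_ne_one, false_iff]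
    rintro ⟨z, -, hz⟩
    exact hxy ((hz x ⟨Or.inl hx, hfx⟩).trans (hz y ⟨Or.inr hy, hfy⟩).symm)

theorem or (hPQ : ∀ x, P x → ¬ Q x) (hP : IsMinCount P f a b) (hQ : IsMinCount Q f c d) :
    IsMinCount (fun x => P x ∨ Q x) f (min a c) (if a < c then b else if c < a then d else 2) := by
  rcases lt_trichotomy a c with hac | rfl | hca
  · simpa [hac, min_eq_left hac.le] using hP.or_of_lt hQ hac
  · simpa using hP.or_of_eq hPQ hQ
  · have hQP := hQ.or_of_lt hP hca
    simp only [or_comm (a := Q _)] at hQP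
    simpa [hca, hca.not_gt, min_eq_right hca.le] using hQP

end IsMinCount

theorem sup_fromEdgeSet_star_adj {G : SimpleGraph V} {v : V} {N : Set V} (hvN : v ∉ N)
    {a b : V} :
    (G ⊔ SimpleGraph.fromEdgeSet ((fun w => s(v, w)) '' N)).Adj a b ↔
      G.Adj a b ∨ (a = v ∧ b ∈ N) ∨ (b = v ∧ a ∈ N) := by
  simp only [SimpleGraph.sup_adj, SimpleGraph.fromEdgeSet_adj, Set.mem_image, Sym2.eq_iff]
  constructor
  · rintro (hab | ⟨⟨w, hw, ⟨rfl, rfl⟩ | ⟨rfl, rfl⟩⟩, -⟩)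
    exacts [Or.inl hab, Or.inr (Or.inl ⟨rfl, hw⟩), Or.inr (Or.inr ⟨rfl, hw⟩)]
  · rintro (hab | ⟨rfl, hb⟩ | ⟨rfl, ha⟩)
    · exact Or.inl hab
    · exact Or.inr ⟨⟨b, hb, Or.inl ⟨rfl, rfl⟩⟩, fun h => hvN (h ▸ hb)⟩
    · exact Or.inr ⟨⟨a, ha, Or.inr ⟨rfl, rfl⟩⟩, fun h => hvN (h ▸ ha)⟩

section Forget

variable [DecidableEq V] {G : SimpleGraph V} {A X S D M N : Finset V} {v : V}

theorem isVCDel_sup_star_iff (hvN : v ∉ N) (hvS : v ∉ S) (hNS : Disjoint N S) :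
    IsVCDel (G ⊔ SimpleGraph.fromEdgeSet ((fun w => s(v, w)) '' (↑N : Set V))) A S M ↔
      IsVCDel G A S M ∧ (v ∈ M ∨ N ⊆ M) := by
  have hvN' : v ∉ (↑N : Set V) := hvN
  simp only [IsVCDel, sup_fromEdgeSet_star_adj hvN', Finset.mem_coe]
  constructor
  · rintro ⟨hMA, hcov⟩
    refine ⟨⟨hMA, fun a b hab => hcov (Or.inl hab)⟩, or_iff_not_imp_left.2 fun hvM w hw => ?_⟩
    exact (hcov (Or.inr (Or.inl ⟨rfl, hw⟩)) hvS (Finset.disjoint_left.1 hNS hw)).resolve_left hvM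
  · rintro ⟨⟨hMA, hcov⟩, hvM | hNM⟩ <;> refine ⟨hMA, ?_⟩
    · rintro a b (hab | ⟨rfl, -⟩ | ⟨rfl, -⟩) ha hb
      exacts [hcov hab ha hb, Or.inl hvM, Or.inr hvM]
    · rintro a b (hab | ⟨-, hb⟩ | ⟨-, ha⟩) ha' hb'
      exacts [hcov hab ha' hb', Or.inr (hNM hb), Or.inl (hNM ha)]

theorem isTypedVC_sup_star_iff (hv : v ∈ X) (hN : N ⊆ X.erase v) (hS : Disjoint S X)
    (hD : D ⊆ X.erase v) :
    IsTypedVC (G ⊔ SimpleGraph.fromEdgeSet ((fun w => s(v, w)) '' (↑N : Set V)))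
        A (X.erase v) S D M ↔
      IsTypedVC G A X S (insert v D) M ∨ (IsTypedVC G A X S D M ∧ N ⊆ D) := by
  have hvD : v ∉ D := fun h => (Finset.mem_erase.1 (hD h)).1 rfl
  have hvN : v ∉ N := fun h => (Finset.mem_erase.1 (hN h)).1 rfl
  have hvS : v ∉ S := Finset.disjoint_right.1 hS hv
  have hNX : N ⊆ X := hN.trans (Finset.erase_subset v X)
  have hNS : Disjoint N S := disjoint_of_subset_left hNX hS.symm
  simp only [IsTypedVC, isVCDel_sup_star_iff hvN hvS hNS, Finset.inter_erase]
  by_cases hvM : v ∈ M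
  · have hvMX : v ∈ M ∩ X := Finset.mem_inter.2 ⟨hvM, hv⟩
    rw [Finset.erase_eq_iff_eq_insert hvMX hvD]
    have : M ∩ X ≠ D := fun h => hvD (h ▸ hvMX)
    simp [hvM, this]
  · have hvMX : v ∉ M ∩ X := fun h => hvM (Finset.mem_inter.1 h).1
    rw [Finset.erase_eq_of_notMem hvMX]
    have : M ∩ X ≠ insert v D := fun h => hvMX (h ▸ Finset.mem_insert_self v D)
    simp only [hvM, false_or, this, and_false]
    constructor
    · rintro ⟨⟨hVC, hNM⟩, hMX⟩
      exact ⟨⟨hVC, hMX⟩, hMX ▸ Finset.subset_inter hNM hNX⟩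
    · rintro ⟨⟨hVC, hMX⟩, hND⟩
      exact ⟨⟨hVC, hND.trans (hMX ▸ Finset.inter_subset_left)⟩, hMX⟩

theorem card_sdiff_erase_of_mem (hvM : v ∈ M) (hv : v ∈ X) :
    (M \ X.erase v).card = (M \ X).card + 1 := by
  rw [Finset.sdiff_erase hvM, Finset.card_insert_of_notMem (by simp [hv])]

theorem sdiff_erase_of_notMem_inter (hvMX : v ∉ M ∩ X) : M \ X.erase v = M \ X := by
  ext u
  simp only [Finset.mem_inter] at hvMX
  simp only [Finset.mem_sdiff, Finset.mem_erase]
  grind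

theorem IsCharacteristic.isMinCount {α β : Finset V → ℕ} (h : IsCharacteristic G A X S α β)
    (hD : D ⊆ X) : IsMinCount (IsTypedVC G A X S D) (fun M => (M \ X).card) (α D) (β D) :=
  h D hD

variable {α' β' : Finset V → ℕ}

theorem IsCharacteristic.isMinCount_insert (h' : IsCharacteristic G A X S α' β') (hv : v ∈ X)
    (hD : D ⊆ X.erase v) :
    IsMinCount (IsTypedVC G A X S (insert v D)) (fun M => (M \ X.erase v).card)
      (α' (insert v D) + 1) (β' (insert v D)) := by
  refine ((h'.isMinCount ?_).add_const 1).congr (fun _ => Iff.rfl) fun _ hM => ?_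
  · exact Finset.insert_subset hv (hD.trans (Finset.erase_subset v X))
  · exact card_sdiff_erase_of_mem (Finset.mem_inter.1 (hM.2 ▸ Finset.mem_insert_self v D)).1 hv

theorem IsCharacteristic.isMinCount_and_subset (h' : IsCharacteristic G A X S α' β')
    (hD : D ⊆ X.erase v) (hND : N ⊆ D) :
    IsMinCount (fun M => IsTypedVC G A X S D M ∧ N ⊆ D) (fun M => (M \ X.erase v).card)
      (α' D) (β' D) :=
  (h'.isMinCount (hD.trans (Finset.erase_subset v X))).congr (fun _ => (and_iff_left hND).symm)
    fun _ hM => congrArg Finset.card (sdiff_erase_of_notMem_inter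
      (hM.2 ▸ fun hvD => (Finset.mem_erase.1 (hD hvD)).1 rfl))

theorem IsCharacteristic.isMinCount_sup_star_of_subset (h' : IsCharacteristic G A X S α' β')
    (hv : v ∈ X) (hN : N ⊆ X.erase v) (hS : Disjoint S X) (hD : D ⊆ X.erase v) (hND : N ⊆ D) :
    IsMinCount
      (IsTypedVC (G ⊔ SimpleGraph.fromEdgeSet ((fun w => s(v, w)) '' (↑N : Set V)))
        A (X.erase v) S D)
      (fun M => (M \ X.erase v).card) (min (α' D) (α' (insert v D) + 1))
      (if α' D < α' (insert v D) + 1 then β' D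
        else if α' (insert v D) + 1 < α' D then β' (insert v D) else 2) := by
  have hvD : v ∉ D := fun h => (Finset.mem_erase.1 (hD h)).1 rfl
  refine ((h'.isMinCount_and_subset hD hND).or (fun M hM hM' => ?_)
    (h'.isMinCount_insert hv hD)).congr
    (fun M => by rw [isTypedVC_sup_star_iff hv hN hS hD, or_comm]) fun _ _ => rfl
  exact hvD (hM.1.2 ▸ hM'.2 ▸ Finset.mem_insert_self v D)

theorem IsCharacteristic.isMinCount_sup_star_of_not_subset (h' : IsCharacteristic G A X S α' β')
    (hv : v ∈ X) (hN : N ⊆ X.erase v) (hS : Disjoint S X) (hD : D ⊆ X.erase v) (hND : ¬ N ⊆ D) :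
    IsMinCount
      (IsTypedVC (G ⊔ SimpleGraph.fromEdgeSet ((fun w => s(v, w)) '' (↑N : Set V)))
        A (X.erase v) S D)
      (fun M => (M \ X.erase v).card) (α' (insert v D) + 1) (β' (insert v D)) :=
  (h'.isMinCount_insert hv hD).congr
    (fun M => by rw [isTypedVC_sup_star_iff hv hN hS hD]; simp [hND]) fun _ _ => rfl

end Forget

theorem char_forget_id_general [DecidableEq V]
    (G' : SimpleGraph V) (A X' : Finset V)
    (v : V) (hv : v ∈ X') (N : Finset V) (hN : N ⊆ X'.erase v)
    (S : Finset V) (hS : S ⊆ A \ X')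
    (α' β' α β : Finset V → ℕ)
    (h' : IsCharacteristic G' A X' S α' β')
    (h : IsCharacteristic
          (G' ⊔ SimpleGraph.fromEdgeSet ((fun w => s(v, w)) '' (↑N : Set V)))
          A (X'.erase v) S α β) :
    ∀ D ⊆ X'.erase v,
      (¬ N ⊆ D → α D = α' (insert v D) + 1) ∧
      (N ⊆ D → α D = min (α' D) (α' (insert v D) + 1)) ∧
      (N ⊆ D → α' D < α' (insert v D) + 1 → β D = β' D) ∧
      ((¬ N ⊆ D ∨ α' (insert v D) + 1 < α' D) → β D = β' (insert v D)) ∧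
      (N ⊆ D → α' D = α' (insert v D) + 1 → β D = 2) := by
  intro D hD
  have hSX' : Disjoint S X' := (Finset.subset_sdiff.1 hS).2
  by_cases hND : N ⊆ D
  · obtain ⟨hα, hβ⟩ :=
      (h.isMinCount hD).unique (h'.isMinCount_sup_star_of_subset hv hN hSX' hD hND)
    refine ⟨absurd hND, fun _ => hα, fun _ hlt => by rw [hβ, if_pos hlt], fun hcase => ?_,
      fun _ heq => by rw [hβ, if_neg heq.not_lt, if_neg heq.symm.not_lt]⟩
    have hgt := hcase.resolve_left (not_not.2 hND)
    rw [hβ, if_neg hgt.not_gt, if_pos hgt]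
  · obtain ⟨hα, hβ⟩ :=
      (h.isMinCount hD).unique (h'.isMinCount_sup_star_of_not_subset hv hN hSX' hD hND)
    exact ⟨fun _ => hα, (absurd · hND), (absurd · hND), fun _ => hβ, (absurd · hND)⟩

/-- Forget operation (vertex kept): removing `v` from the terminals and adding
the edges from `v` to `N ⊆ X = X' \ {v}`, the characteristic of `S` in the new
terminal graph `(G, X)` is computed from its characteristic in `(G', X')`. -/
theorem char_forget_id [Fintype V] [DecidableEq V]
    (G' : SimpleGraph V) (A X' : Finset V) (hG' : IsTerminalGraph G' A X')
    (v : V) (hv : v ∈ X') (N : Finset V) (hN : N ⊆ X'.erase v)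
    (S : Finset V) (hS : S ⊆ A \ X')
    (α' β' α β : Finset V → ℕ)
    (h' : IsCharacteristic G' A X' S α' β')
    (h : IsCharacteristic
          (G' ⊔ SimpleGraph.fromEdgeSet ((fun w => s(v, w)) '' (↑N : Set V)))
          A (X'.erase v) S α β) :
    ∀ D ⊆ X'.erase v,
      (¬ N ⊆ D → α D = α' (insert v D) + 1) ∧
      (N ⊆ D → α D = min (α' D) (α' (insert v D) + 1)) ∧
      (N ⊆ D → α' D < α' (insert v D) + 1 → β D = β' D) ∧
      ((¬ N ⊆ D ∨ α' (insert v D) + 1 < α' D) → β D = β' (insert v D)) ∧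
      (N ⊆ D → α' D = α' (insert v D) + 1 → β D = 2) :=
  char_forget_id_general G' A X' v hv N hN S hS α' β' α β h' h
end
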